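/- Let G be a connected graph of order n ≥ 6 with at least two dominating vertices. Then ξ^c(G) ≥ 6n - 10, with equality if and only if G is isomorphic to S_{n,2}, the graph obtained by joining every vertex of an independent set of n-2 vertices to both vertices of an edge. -/

import Mathlib

open SimpleGraph Finset

noncomputable def deg {V : Type*} (G : SimpleGraph V) [Fintype V] (v : V) : ℕ :=
  letI := Classical.decRel G.Adj; G.degree v

noncomputable def ecc {V : Type*} (G : SimpleGraph V) [Fintype V] (v : V) : ℕ :=
  Finset.univ.sup (fun w => G.dist v w)

noncomputable def eci {V : Type*} (G : SimpleGraph V) [Fintype V] : ℕ :=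
  ∑ v, deg G v * ecc G v

noncomputable def pendingCount {V : Type*} (G : SimpleGraph V) [Fintype V] : ℕ :=
  (Finset.univ.filter (fun v => deg G v = 1)).card

/-- Join of an edge with an empty graph on n - 2 vertices. -/
def Sn2 (n : ℕ) : SimpleGraph (Fin n) :=
  SimpleGraph.fromRel (fun v w => v.val < 2 ∨ w.val < 2)

/-!
A dominating (universal) vertex has eccentricity 1, and once one exists every other vertex has
eccentricity 2: it is at distance 2 from a non-neighbour, through the dominating vertex. With `d`
dominating vertices this gives `ξ^c(G) = d (n - 1) + 2 ∑ deg v`, the sum running over the other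
vertices. Each of those is adjacent to all `d ≥ 2` dominating vertices, so
`ξ^c(G) ≥ d (n - 1) + 4 (n - d) = d (n - 5) + 4 n ≥ 6 n - 10`, with equality iff `d = 2` and
every other vertex has degree exactly 2, i.e. sees only the two dominating vertices:
`G ≅ S_{n,2}`.
-/

namespace SimpleGraph

variable {V : Type*}

/-- The clique on `S` joined to the independent set `Sᶜ`; `Sn2 n` is the case `#S = 2`. -/
def completeSplitGraph (S : Finset V) : SimpleGraph V :=
  fromRel fun v w => v ∈ S ∨ w ∈ S

@[simp]
lemma completeSplitGraph_adj {S : Finset V} {v w : V} :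
    (completeSplitGraph S).Adj v w ↔ v ≠ w ∧ (v ∈ S ∨ w ∈ S) := by
  rw [completeSplitGraph, fromRel_adj]
  tauto

lemma isUniversal_completeSplitGraph_of_mem {S : Finset V} {v : V} (hv : v ∈ S) :
    (completeSplitGraph S).IsUniversal v :=
  fun _ hvw => completeSplitGraph_adj.mpr ⟨hvw, .inl hv⟩

lemma completeSplitGraph_adj_congr {S T : Finset V} (σ : V ≃ V)
    (hσ : ∀ x, σ x ∈ S ↔ x ∈ T) (v w : V) :
    (completeSplitGraph S).Adj (σ v) (σ w) ↔ (completeSplitGraph T).Adj v w := by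
  simp only [completeSplitGraph_adj, hσ, σ.injective.ne_iff]

lemma nonempty_iso_completeSplitGraph_iff [Fintype V] [DecidableEq V] {G : SimpleGraph V}
    {S : Finset V} :
    Nonempty (G ≃g completeSplitGraph S) ↔
      ∃ T : Finset V, #T = #S ∧ G = completeSplitGraph T := by
  constructor
  · rintro ⟨f⟩
    refine ⟨S.map f.symm.toEquiv.toEmbedding, card_map _, ?_⟩
    ext v w
    rw [← f.map_adj_iff]
    exact completeSplitGraph_adj_congr f.toEquiv (fun x => by rw [mem_map_equiv]; rfl) v w
  · rintro ⟨T, hT, rfl⟩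
    obtain ⟨e⟩ : Nonempty (T ≃ S) := Fintype.card_eq.mp (by simp [hT])
    have he : ∀ x, Equiv.extendSubtype e x ∈ S ↔ x ∈ T := fun x => by
      by_cases hx : x ∈ T
      · simp [hx, Equiv.extendSubtype_mem e x hx]
      · simp [hx, Equiv.extendSubtype_not_mem e x hx]
    exact ⟨⟨Equiv.extendSubtype e, completeSplitGraph_adj_congr _ he _ _⟩⟩

lemma dist_le_one_of_isUniversal {G : SimpleGraph V} {u : V} (hu : G.IsUniversal u) (w : V) :
    G.dist u w ≤ 1 := by
  rcases eq_or_ne u w with rfl | huw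
  · simp
  · exact (dist_eq_one_iff_adj.mpr (hu huw)).le

section Eccentricity

variable [Fintype V] {G : SimpleGraph V} {u v : V}

lemma ecc_of_isUniversal [Nontrivial V] (hu : G.IsUniversal u) : ecc G u = 1 := by
  refine le_antisymm (Finset.sup_le fun w _ => dist_le_one_of_isUniversal hu w) ?_
  obtain ⟨w, hwu⟩ := exists_ne u
  calc 1 = G.dist u w := (dist_eq_one_iff_adj.mpr (hu hwu.symm)).symm
    _ ≤ ecc G u := Finset.le_sup (mem_univ w)

lemma ecc_of_not_isUniversal (hu : G.IsUniversal u) (hv : ¬G.IsUniversal v) :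
    ecc G v = 2 := by
  have hconn : G.Connected := Connected.of_isUniversal hu
  refine le_antisymm (Finset.sup_le fun w _ => ?_) ?_
  · calc G.dist v w ≤ G.dist v u + G.dist u w := hconn.dist_triangle
      _ ≤ 1 + 1 := by
        rw [dist_comm]
        exact add_le_add (dist_le_one_of_isUniversal hu v) (dist_le_one_of_isUniversal hu w)
  · obtain ⟨w, hvw, hadj⟩ : ∃ w, v ≠ w ∧ ¬G.Adj v w := by
      simpa [IsUniversal] using hv
    exact (hconn.one_lt_dist_of_ne_of_not_adj hvw hadj).trans_le (Finset.le_sup (mem_univ w))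

end Eccentricity

section Universal

variable [Fintype V] {G : SimpleGraph V} [DecidableRel G.Adj] {v : V}

/-- The dominating vertices, cut out by the paper's degree condition; see `mem_universalFinset`. -/
def universalFinset (G : SimpleGraph V) [DecidableRel G.Adj] : Finset V :=
  univ.filter fun v => G.degree v = Fintype.card V - 1

@[simp]
lemma mem_universalFinset : v ∈ G.universalFinset ↔ G.IsUniversal v := by
  simp [universalFinset]

lemma universalFinset_subset_neighborFinset (hv : ¬G.IsUniversal v) :
    G.universalFinset ⊆ G.neighborFinset v := fun u hu => by
  rw [mem_universalFinset] at hu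
  exact (mem_neighborFinset _ _ _).mpr (hu fun huv => hv (by rwa [← huv])).symm

lemma card_universalFinset_le_degree (hv : ¬G.IsUniversal v) :
    #G.universalFinset ≤ G.degree v := by
  rw [← card_neighborFinset_eq_degree]
  exact card_le_card (universalFinset_subset_neighborFinset hv)

lemma eq_completeSplitGraph_universalFinset
    (h : ∀ v, ¬G.IsUniversal v → G.degree v ≤ #G.universalFinset) :
    G = completeSplitGraph G.universalFinset := by
  ext v w
  rw [completeSplitGraph_adj, mem_universalFinset, mem_universalFinset]
  refine ⟨fun hvw => ⟨hvw.ne, ?_⟩, ?_⟩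
  · by_contra! hvw'
    have hN : G.universalFinset = G.neighborFinset v :=
      eq_of_subset_of_card_le (universalFinset_subset_neighborFinset hvw'.1)
        (by simpa using h v hvw'.1)
    exact hvw'.2 (mem_universalFinset.mp (hN ▸ (mem_neighborFinset _ _ _).mpr hvw))
  · rintro ⟨hvw, hv | hw⟩
    exacts [hv hvw, (hw hvw.symm).symm]

lemma degree_completeSplitGraph_of_notMem {S : Finset V}
    [DecidableRel (completeSplitGraph S).Adj] (hv : v ∉ S) :
    (completeSplitGraph S).degree v = #S := by
  rw [← card_neighborFinset_eq_degree]
  congr 1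
  ext w
  simp only [mem_neighborFinset, completeSplitGraph_adj, hv, false_or]
  exact ⟨And.right, fun hw => ⟨fun hvw => hv (hvw ▸ hw), hw⟩⟩

lemma universalFinset_completeSplitGraph {S : Finset V}
    [DecidableRel (completeSplitGraph S).Adj] (hS : #S ≠ Fintype.card V - 1) :
    (completeSplitGraph S).universalFinset = S := by
  ext v
  rw [mem_universalFinset]
  refine ⟨fun hv => ?_, isUniversal_completeSplitGraph_of_mem⟩
  by_contra hvS
  rw [← degree_eq_card_sub_one, degree_completeSplitGraph_of_notMem hvS] at hv
  exact hS hv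

lemma exists_eq_completeSplitGraph_iff {k : ℕ} (hk : k ≠ Fintype.card V - 1) :
    (∃ T : Finset V, #T = k ∧ G = completeSplitGraph T) ↔
      #G.universalFinset = k ∧ ∀ v, ¬G.IsUniversal v → G.degree v = k := by
  constructor
  · rintro ⟨T, rfl, rfl⟩
    rw [universalFinset_completeSplitGraph hk]
    exact ⟨rfl, fun v hv => degree_completeSplitGraph_of_notMem
      (fun hvT => hv (isUniversal_completeSplitGraph_of_mem hvT))⟩
  · rintro ⟨hU, hdeg⟩
    exact ⟨_, hU, eq_completeSplitGraph_universalFinset fun v hv =>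
      ((hdeg v hv).trans hU.symm).le⟩

end Universal

section Eci

variable [Fintype V] {G : SimpleGraph V} [DecidableRel G.Adj] {u v : V}

lemma deg_eq_degree : deg G v = G.degree v := by
  unfold deg
  convert rfl

lemma two_le_degree_of_not_isUniversal (hU : 2 ≤ #G.universalFinset)
    (hv : ¬G.IsUniversal v) : 2 ≤ G.degree v :=
  hU.trans (card_universalFinset_le_degree hv)

variable [DecidableEq V]

lemma eci_eq_of_isUniversal [Nontrivial V] (hu : G.IsUniversal u) :
    eci G = #G.universalFinset * (Fintype.card V - 1) +
      2 * ∑ v ∈ G.universalFinsetᶜ, G.degree v := by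
  rw [eci, ← sum_add_sum_compl G.universalFinset, mul_sum]
  congr 1
  · rw [← smul_eq_mul, ← sum_const]
    refine sum_congr rfl fun v hv => ?_
    rw [mem_universalFinset] at hv
    rw [deg_eq_degree, ecc_of_isUniversal hv, (degree_eq_card_sub_one G v).mpr hv, mul_one]
  · refine sum_congr rfl fun v hv => ?_
    rw [mem_compl, mem_universalFinset] at hv
    rw [deg_eq_degree, ecc_of_not_isUniversal hu hv, mul_comm]

lemma two_mul_card_sub_le_sum_degree (hU : 2 ≤ #G.universalFinset) :
    2 * (Fintype.card V - #G.universalFinset) ≤ ∑ v ∈ G.universalFinsetᶜ, G.degree v := by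
  rw [← card_compl, mul_comm, ← smul_eq_mul, ← sum_const]
  exact sum_le_sum fun v hv =>
    two_le_degree_of_not_isUniversal hU (by simpa using hv)

lemma sum_degree_eq_two_mul_card_sub_iff (hU : 2 ≤ #G.universalFinset) :
    ∑ v ∈ G.universalFinsetᶜ, G.degree v = 2 * (Fintype.card V - #G.universalFinset) ↔
      ∀ v, ¬G.IsUniversal v → G.degree v = 2 := by
  rw [← card_compl, mul_comm, ← smul_eq_mul, ← sum_const, eq_comm,
    sum_eq_sum_iff_of_le fun v hv => two_le_degree_of_not_isUniversal hU (by simpa using hv)]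
  simp [eq_comm]

end Eci

end SimpleGraph

lemma six_mul_sub_ten_le {N d S : ℕ} (hN : 6 ≤ N) (hd : 2 ≤ d) (hdN : d ≤ N)
    (hS : 2 * (N - d) ≤ S) :
    6 * N - 10 ≤ d * (N - 1) + 2 * S ∧
      (d * (N - 1) + 2 * S = 6 * N - 10 ↔ d = 2 ∧ S = 2 * (N - d)) := by
  obtain ⟨m, rfl⟩ : ∃ m, N = m + 6 := ⟨N - 6, by omega⟩
  obtain ⟨e, rfl⟩ : ∃ e, d = e + 2 := ⟨d - 2, by omega⟩
  have hexp : (e + 2) * (m + 6 - 1) = e * m + 5 * e + 2 * m + 10 := by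
    rw [show m + 6 - 1 = m + 5 by omega]
    ring
  -- `omega` only needs to know that the product `e * m` vanishes with `e`.
  have hq : e = 0 → e * m = 0 := by
    rintro rfl
    simp
  rw [hexp]
  generalize e * m = q at hq
  omega

theorem stmt4_general (n : ℕ) (hn : 6 ≤ n) (G : SimpleGraph (Fin n))
    (hdom : 2 ≤ (Finset.univ.filter (fun v => deg G v = n - 1)).card) :
    6 * n - 10 ≤ eci G ∧ (eci G = 6 * n - 10 ↔ Nonempty (G ≃g Sn2 n)) := by
  classical
  have hfilter : univ.filter (fun v => deg G v = n - 1) = G.universalFinset := by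
    simp [universalFinset, deg_eq_degree]
  rw [hfilter] at hdom
  obtain ⟨u, hu⟩ := card_pos.mp (by omega : 0 < #G.universalFinset)
  have : Nontrivial (Fin n) := Fin.nontrivial_iff_two_le.mpr (by omega)
  have hSn2 : Sn2 n = completeSplitGraph (univ.filter fun v : Fin n => v.val < 2) := by
    simp only [Sn2, completeSplitGraph, mem_filter, mem_univ, true_and]
  have hcard : #(univ.filter fun v : Fin n => v.val < 2) = 2 := by
    rw [Fin.card_filter_val_lt]
    omega
  obtain ⟨hle, heq⟩ := six_mul_sub_ten_le (hn.trans_eq (Fintype.card_fin n).symm) hdom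
    (card_le_univ _) (two_mul_card_sub_le_sum_degree hdom)
  rw [eci_eq_of_isUniversal (mem_universalFinset.mp hu)]
  have hsum := sum_degree_eq_two_mul_card_sub_iff hdom
  simp only [Fintype.card_fin] at hle heq hsum ⊢
  refine ⟨hle, ?_⟩
  rw [heq, hsum, hSn2, nonempty_iso_completeSplitGraph_iff, hcard,
    exists_eq_completeSplitGraph_iff (by rw [Fintype.card_fin]; omega)]

theorem stmt4 (n : ℕ) (hn : 6 ≤ n) (G : SimpleGraph (Fin n)) (hc : G.Connected)
    (hdom : 2 ≤ (Finset.univ.filter (fun v => deg G v = n - 1)).card) :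
    6 * n - 10 ≤ eci G ∧ (eci G = 6 * n - 10 ↔ Nonempty (G ≃g Sn2 n)) :=
  stmt4_general n hn G hdom
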